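/- Let 0<x<1, r>1, and 0<s<2. The product ∘ is associative: for all positive integers m,n,l and all functions f_m, f_n, f_l of m (respectively n, l) pairs of variables, each symmetric in its z-variables and in its w-variables, one has ((f_m ∘ f_n) ∘ f_l)(z_1,…,z_{m+n+l}|w_1,…,w_{m+n+l}) = (f_m ∘ (f_n ∘ f_l))(z_1,…,z_{m+n+l}|w_1,…,w_{m+n+l}) at every point (u_1,…,u_{m+n+l},v_1,…,v_{m+n+l})∈ℂ^{2(m+n+l)} at which all theta factors appearing in the denominators of both sides are nonzero. -/

import Mathlib

open Finset Equiv

noncomputable def pochInf (q z : ℂ) : ℂ := ∏' j : ℕ, (1 - q ^ j * z)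

noncomputable def thetaFn (q z : ℂ) : ℂ := pochInf q q * pochInf q z * pochInf q (q / z)

noncomputable def jt (x ρ : ℝ) (u : ℂ) : ℂ :=
  (x : ℂ) ^ (u ^ 2 / (ρ : ℂ) - u) * thetaFn ((x : ℂ) ^ ((2 * ρ : ℝ) : ℂ)) ((x : ℂ) ^ (2 * u)) /
    pochInf ((x : ℂ) ^ ((2 * ρ : ℝ) : ℂ)) ((x : ℂ) ^ ((2 * ρ : ℝ) : ℂ)) ^ 3

noncomputable def circProd (x r s : ℝ) (m n : ℕ)
    (f : (Fin m → ℂ) → (Fin m → ℂ) → ℂ) (g : (Fin n → ℂ) → (Fin n → ℂ) → ℂ)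
    (u v : Fin (m + n) → ℂ) : ℂ :=
  (1 / ((Nat.factorial (m + n) : ℂ)) ^ 2) *
    ∑ σ : Equiv.Perm (Fin (m + n)), ∑ τ : Equiv.Perm (Fin (m + n)),
      f (fun i => u (σ (Fin.castAdd n i))) (fun i => v (τ (Fin.castAdd n i))) *
      g (fun j => u (σ (Fin.natAdd m j))) (fun j => v (τ (Fin.natAdd m j))) *
      ∏ i : Fin m, ∏ j : Fin n,
        (jt x r (v (τ (Fin.castAdd n i)) - u (σ (Fin.natAdd m j)) + (s : ℂ) / 2) *
            jt x r (u (σ (Fin.castAdd n i)) - v (τ (Fin.natAdd m j)) + (s : ℂ) / 2) *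
            jt x r (u (σ (Fin.natAdd m j)) - v (τ (Fin.castAdd n i)) + (s : ℂ) / 2 - 1) *
            jt x r (v (τ (Fin.natAdd m j)) - u (σ (Fin.castAdd n i)) + (s : ℂ) / 2 - 1)) /
        (jt x r (u (σ (Fin.castAdd n i)) - u (σ (Fin.natAdd m j))) *
            jt x r (u (σ (Fin.natAdd m j)) - u (σ (Fin.castAdd n i)) - 1) *
            jt x r (v (τ (Fin.castAdd n i)) - v (τ (Fin.natAdd m j))) *
            jt x r (v (τ (Fin.natAdd m j)) - v (τ (Fin.castAdd n i)) - 1))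

/-!
Write the product as `f ∘ g = Sym(f ⊗ g · I)`, where `Sym` averages over independent permutations
of the `u`'s and of the `v`'s, and `I` is the product, over pairs of a slot of the first block and a
slot of the second, of theta factors each depending on one variable of each slot. Then `I` is
invariant under permuting the `u`'s or the `v`'s of one block separately, so a symmetrization of a
factor is absorbed by the outer one: `(f ∘ g) ∘ h` and `f ∘ (g ∘ h)` are both the full
symmetrization of `f ⊗ g ⊗ h` times the three pairwise interactions of the blocks.
-/

namespace FeiginOdesskii

variable {α 𝕜 : Type*} [Field 𝕜]

noncomputable def symmetrize {N : ℕ} (F : (Fin N → α) → (Fin N → α) → 𝕜) (u v : Fin N → α) : 𝕜 :=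
  1 / (N.factorial : 𝕜) ^ 2 * ∑ σ : Perm (Fin N), ∑ τ : Perm (Fin N), F (u ∘ σ) (v ∘ τ)

section symmetrize
variable {N : ℕ}

theorem symmetrize_const_mul (c : 𝕜) (F : (Fin N → α) → (Fin N → α) → 𝕜) :
    symmetrize (fun a b => c * F a b) = fun u v => c * symmetrize F u v := by
  ext u v
  simp only [symmetrize, Finset.mul_sum]
  ring_nf

theorem symmetrize_sum {ι : Type*} (s : Finset ι) (F : ι → (Fin N → α) → (Fin N → α) → 𝕜) :
    symmetrize (fun a b => ∑ k ∈ s, F k a b) = fun u v => ∑ k ∈ s, symmetrize (F k) u v := by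
  ext u v
  simp only [symmetrize, Finset.mul_sum]
  exact (Finset.sum_congr rfl fun σ _ => Finset.sum_comm).trans Finset.sum_comm

theorem symmetrize_comp_perm (F : (Fin N → α) → (Fin N → α) → 𝕜) (β γ : Perm (Fin N)) :
    symmetrize (fun a b => F (a ∘ β) (b ∘ γ)) = symmetrize F := by
  ext u v
  simp only [symmetrize, Function.comp_assoc, ← Perm.coe_mul]
  congr 1
  exact Fintype.sum_equiv (Equiv.mulRight β) _ _ fun σ =>
    Fintype.sum_equiv (Equiv.mulRight γ) _ _ fun τ => rfl

theorem symmetrize_average [CharZero 𝕜] {M : ℕ} (e : Perm (Fin M) → Perm (Fin N))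
    (F : (Fin N → α) → (Fin N → α) → 𝕜) :
    symmetrize (fun a b => 1 / (M.factorial : 𝕜) ^ 2 * ∑ ρ : Perm (Fin M), ∑ π : Perm (Fin M),
      F (a ∘ e ρ) (b ∘ e π)) = symmetrize F := by
  have hM : (M.factorial : 𝕜) ≠ 0 := Nat.cast_ne_zero.2 M.factorial_ne_zero
  ext u v
  simp only [symmetrize_const_mul, symmetrize_sum, symmetrize_comp_perm, Finset.sum_const,
    Finset.card_univ, Fintype.card_perm, Fintype.card_fin, nsmul_eq_mul]
  field_simp

theorem symmetrize_comp_cast {N' : ℕ} (h : N = N') (F : (Fin N → α) → (Fin N → α) → 𝕜)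
    (u v : Fin N' → α) :
    symmetrize F (u ∘ Fin.cast h) (v ∘ Fin.cast h) =
      symmetrize (fun a b => F (a ∘ Fin.cast h) (b ∘ Fin.cast h)) u v := by
  subst h
  simp

end symmetrize

section blocks
variable {m n : ℕ}

def pairProd (φ : α → α → 𝕜) (a : Fin m → α) (c : Fin n → α) : 𝕜 :=
  ∏ i, ∏ j, φ (a i) (c j)

theorem pairProd_comp_perm_left (φ : α → α → 𝕜) (a : Fin m → α) (c : Fin n → α)
    (ρ : Perm (Fin m)) : pairProd φ (a ∘ ρ) c = pairProd φ a c :=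
  Fintype.prod_equiv ρ _ _ fun _ => rfl

theorem pairProd_comp_perm_right (φ : α → α → 𝕜) (a : Fin m → α) (c : Fin n → α)
    (ρ : Perm (Fin n)) : pairProd φ a (c ∘ ρ) = pairProd φ a c :=
  Finset.prod_congr rfl fun _ _ => Fintype.prod_equiv ρ _ _ fun _ => rfl

/-- `φ` couples two `u`'s or two `v`'s and `ψ` a `u` with a `v`; the kernel of `∘` has this shape
with `φ = thetaSelf x r` and `ψ = thetaCross x r s`. -/
def interaction (φ ψ : α → α → 𝕜) (a b : Fin m → α) (c d : Fin n → α) : 𝕜 :=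
  pairProd φ a c * pairProd φ b d * pairProd ψ a d * pairProd ψ b c

theorem interaction_comp_perm_left (φ ψ : α → α → 𝕜) (a b : Fin m → α) (c d : Fin n → α)
    (ρ π : Perm (Fin m)) : interaction φ ψ (a ∘ ρ) (b ∘ π) c d = interaction φ ψ a b c d := by
  simp only [interaction, pairProd_comp_perm_left]

theorem interaction_comp_perm_right (φ ψ : α → α → 𝕜) (a b : Fin m → α) (c d : Fin n → α)
    (ρ π : Perm (Fin n)) : interaction φ ψ a b (c ∘ ρ) (d ∘ π) = interaction φ ψ a b c d := by
  simp only [interaction, pairProd_comp_perm_right]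

def blockTerm (φ ψ : α → α → 𝕜) (f : (Fin m → α) → (Fin m → α) → 𝕜)
    (g : (Fin n → α) → (Fin n → α) → 𝕜) (a b : Fin (m + n) → α) : 𝕜 :=
  f (a ∘ Fin.castAdd n) (b ∘ Fin.castAdd n) * g (a ∘ Fin.natAdd m) (b ∘ Fin.natAdd m) *
    interaction φ ψ (a ∘ Fin.castAdd n) (b ∘ Fin.castAdd n) (a ∘ Fin.natAdd m) (b ∘ Fin.natAdd m)

variable (m n) in
def blockPermLeft (ρ : Perm (Fin m)) : Perm (Fin (m + n)) :=
  finSumFinEquiv.permCongr (ρ.sumCongr (Equiv.refl (Fin n)))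

variable (m n) in
def blockPermRight (ρ : Perm (Fin n)) : Perm (Fin (m + n)) :=
  finSumFinEquiv.permCongr ((Equiv.refl (Fin m)).sumCongr ρ)

theorem blockPermLeft_comp_castAdd (ρ : Perm (Fin m)) :
    blockPermLeft m n ρ ∘ Fin.castAdd n = Fin.castAdd n ∘ ρ := by
  ext; simp [blockPermLeft]

theorem blockPermLeft_comp_natAdd (ρ : Perm (Fin m)) :
    blockPermLeft m n ρ ∘ Fin.natAdd m = Fin.natAdd m := by
  ext; simp [blockPermLeft]

theorem blockPermRight_comp_castAdd (ρ : Perm (Fin n)) :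
    blockPermRight m n ρ ∘ Fin.castAdd n = Fin.castAdd n := by
  ext; simp [blockPermRight]

theorem blockPermRight_comp_natAdd (ρ : Perm (Fin n)) :
    blockPermRight m n ρ ∘ Fin.natAdd m = Fin.natAdd m ∘ ρ := by
  ext; simp [blockPermRight]

theorem blockTerm_symmetrize_left (φ ψ : α → α → 𝕜) (f : (Fin m → α) → (Fin m → α) → 𝕜)
    (g : (Fin n → α) → (Fin n → α) → 𝕜) :
    blockTerm φ ψ (symmetrize f) g = fun a b => 1 / (m.factorial : 𝕜) ^ 2 *
      ∑ ρ : Perm (Fin m), ∑ π : Perm (Fin m),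
        blockTerm φ ψ f g (a ∘ blockPermLeft m n ρ) (b ∘ blockPermLeft m n π) := by
  ext a b
  have hterm (ρ π : Perm (Fin m)) :
      blockTerm φ ψ f g (a ∘ blockPermLeft m n ρ) (b ∘ blockPermLeft m n π) =
        f (a ∘ Fin.castAdd n ∘ ρ) (b ∘ Fin.castAdd n ∘ π) *
          (g (a ∘ Fin.natAdd m) (b ∘ Fin.natAdd m) *
            interaction φ ψ (a ∘ Fin.castAdd n) (b ∘ Fin.castAdd n) (a ∘ Fin.natAdd m)
              (b ∘ Fin.natAdd m)) := by
    rw [← interaction_comp_perm_left φ ψ _ _ _ _ ρ π]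
    simp only [blockTerm, Function.comp_assoc, blockPermLeft_comp_castAdd,
      blockPermLeft_comp_natAdd, mul_assoc]
  simp only [hterm, ← Finset.sum_mul]
  simp only [blockTerm, symmetrize, Function.comp_assoc, mul_assoc]

theorem blockTerm_symmetrize_right (φ ψ : α → α → 𝕜) (f : (Fin m → α) → (Fin m → α) → 𝕜)
    (g : (Fin n → α) → (Fin n → α) → 𝕜) :
    blockTerm φ ψ f (symmetrize g) = fun a b => 1 / (n.factorial : 𝕜) ^ 2 *
      ∑ ρ : Perm (Fin n), ∑ π : Perm (Fin n),
        blockTerm φ ψ f g (a ∘ blockPermRight m n ρ) (b ∘ blockPermRight m n π) := by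
  ext a b
  have hterm (ρ π : Perm (Fin n)) :
      blockTerm φ ψ f g (a ∘ blockPermRight m n ρ) (b ∘ blockPermRight m n π) =
        g (a ∘ Fin.natAdd m ∘ ρ) (b ∘ Fin.natAdd m ∘ π) *
          (f (a ∘ Fin.castAdd n) (b ∘ Fin.castAdd n) *
            interaction φ ψ (a ∘ Fin.castAdd n) (b ∘ Fin.castAdd n) (a ∘ Fin.natAdd m)
              (b ∘ Fin.natAdd m)) := by
    rw [← interaction_comp_perm_right φ ψ _ _ _ _ ρ π]
    simp only [blockTerm, Function.comp_assoc, blockPermRight_comp_castAdd,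
      blockPermRight_comp_natAdd]
    ring
  simp only [hterm, ← Finset.sum_mul]
  simp only [blockTerm, symmetrize, Function.comp_assoc]
  ring

theorem symmetrize_blockTerm_symmetrize_left [CharZero 𝕜] (φ ψ : α → α → 𝕜)
    (f : (Fin m → α) → (Fin m → α) → 𝕜) (g : (Fin n → α) → (Fin n → α) → 𝕜) :
    symmetrize (blockTerm φ ψ (symmetrize f) g) = symmetrize (blockTerm φ ψ f g) := by
  rw [blockTerm_symmetrize_left, symmetrize_average]

theorem symmetrize_blockTerm_symmetrize_right [CharZero 𝕜] (φ ψ : α → α → 𝕜)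
    (f : (Fin m → α) → (Fin m → α) → 𝕜) (g : (Fin n → α) → (Fin n → α) → 𝕜) :
    symmetrize (blockTerm φ ψ f (symmetrize g)) = symmetrize (blockTerm φ ψ f g) := by
  rw [blockTerm_symmetrize_right, symmetrize_average]

theorem blockTerm_assoc {l : ℕ} (φ ψ : α → α → 𝕜) (f : (Fin m → α) → (Fin m → α) → 𝕜)
    (g : (Fin n → α) → (Fin n → α) → 𝕜) (h : (Fin l → α) → (Fin l → α) → 𝕜) :
    blockTerm φ ψ (blockTerm φ ψ f g) h = fun a b =>
      blockTerm φ ψ f (blockTerm φ ψ g h) (a ∘ Fin.cast (Nat.add_assoc m n l).symm)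
        (b ∘ Fin.cast (Nat.add_assoc m n l).symm) := by
  ext a b
  simp only [blockTerm, interaction, pairProd, Fin.prod_univ_add, Finset.prod_mul_distrib,
    Function.comp_def, Fin.castAdd_castAdd, Fin.castAdd_natAdd, Fin.natAdd_natAdd, Fin.cast_cast,
    Fin.cast_eq_self]
  ring

end blocks

noncomputable def thetaSelf (x r : ℝ) (p q : ℂ) : ℂ := (jt x r (p - q) * jt x r (q - p - 1))⁻¹

noncomputable def thetaCross (x r s : ℝ) (p q : ℂ) : ℂ :=
  jt x r (p - q + (s : ℂ) / 2) * jt x r (q - p + (s : ℂ) / 2 - 1)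

theorem circProd_eq_symmetrize (x r s : ℝ) {m n : ℕ} (f : (Fin m → ℂ) → (Fin m → ℂ) → ℂ)
    (g : (Fin n → ℂ) → (Fin n → ℂ) → ℂ) :
    circProd x r s m n f g = symmetrize (blockTerm (thetaSelf x r) (thetaCross x r s) f g) := by
  ext u v
  unfold circProd symmetrize
  congr 1
  refine Finset.sum_congr rfl fun σ _ => Finset.sum_congr rfl fun τ _ => ?_
  simp only [blockTerm, interaction, pairProd, ← Finset.prod_mul_distrib]
  congr 1
  refine Finset.prod_congr rfl fun i _ => Finset.prod_congr rfl fun j _ => ?_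
  simp only [thetaSelf, thetaCross, Function.comp_apply, div_eq_mul_inv, mul_inv]
  ring

end FeiginOdesskii

open FeiginOdesskii

theorem circProd_assoc_general (x r s : ℝ) (m n l : ℕ)
    (f : (Fin m → ℂ) → (Fin m → ℂ) → ℂ)
    (g : (Fin n → ℂ) → (Fin n → ℂ) → ℂ)
    (h : (Fin l → ℂ) → (Fin l → ℂ) → ℂ)
    (u v : Fin (m + n + l) → ℂ) :
    circProd x r s (m + n) l (circProd x r s m n f g) h u v =
      circProd x r s m (n + l) f (circProd x r s n l g h)
        (fun i => u (Fin.cast (Nat.add_assoc m n l).symm i))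
        (fun i => v (Fin.cast (Nat.add_assoc m n l).symm i)) := by
  simp only [circProd_eq_symmetrize, symmetrize_blockTerm_symmetrize_left,
    symmetrize_blockTerm_symmetrize_right, blockTerm_assoc]
  exact (symmetrize_comp_cast _ _ u v).symm

/-- Associativity of the Feigin–Odesskii product `∘`: for symmetric functions
`f`, `g`, `h` of `m`, `n`, `l` pairs of variables, `(f ∘ g) ∘ h = f ∘ (g ∘ h)` at every
point where all theta factors appearing in the denominators of both sides are nonzero. -/
theorem circProd_assoc (x r s : ℝ) (hx0 : 0 < x) (hx1 : x < 1) (hr : 1 < r)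
    (hs0 : 0 < s) (hs2 : s < 2) (m n l : ℕ) (hm : 0 < m) (hn : 0 < n) (hl : 0 < l)
    (f : (Fin m → ℂ) → (Fin m → ℂ) → ℂ)
    (g : (Fin n → ℂ) → (Fin n → ℂ) → ℂ)
    (h : (Fin l → ℂ) → (Fin l → ℂ) → ℂ)
    (hf : ∀ (σ τ : Equiv.Perm (Fin m)) (a b : Fin m → ℂ), f (a ∘ σ) (b ∘ τ) = f a b)
    (hg : ∀ (σ τ : Equiv.Perm (Fin n)) (a b : Fin n → ℂ), g (a ∘ σ) (b ∘ τ) = g a b)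
    (hh : ∀ (σ τ : Equiv.Perm (Fin l)) (a b : Fin l → ℂ), h (a ∘ σ) (b ∘ τ) = h a b)
    (u v : Fin (m + n + l) → ℂ)
    (hu : ∀ p q : Fin (m + n + l), p ≠ q →
      jt x r (u p - u q) ≠ 0 ∧ jt x r (u p - u q - 1) ≠ 0)
    (hv : ∀ p q : Fin (m + n + l), p ≠ q →
      jt x r (v p - v q) ≠ 0 ∧ jt x r (v p - v q - 1) ≠ 0) :
    circProd x r s (m + n) l (circProd x r s m n f g) h u v =
      circProd x r s m (n + l) f (circProd x r s n l g h)
        (fun i => u (Fin.cast (Nat.add_assoc m n l).symm i))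
        (fun i => v (Fin.cast (Nat.add_assoc m n l).symm i)) :=
  circProd_assoc_general x r s m n l f g h u v
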